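/- arXiv:1311.7630 — 2 statements merged into one kernel-verified Lean document; each statement's English description precedes it below -/
import Mathlib

section
/- The even-length subgroup E of the group Γ = ℤ₂^{*n} / ⟨⟨(aᵢaⱼ)^s = e for all i,j, and aᵢaⱼa_k = a_k aⱼ aᵢ for all i,j,k⟩⟩ is abelian and is generated by the elements bᵢ = aₙaᵢ for i = 1,…,n−1, each of order dividing s; in fact E is isomorphic to ℤ_s^{⊕(n−1)} via bᵢ ↦ (i-th standard generator). -/
/-- Relations: `aᵢ² = 1`, `(aᵢaⱼ)^s = 1` and `aᵢaⱼaₖ = aₖaⱼaᵢ`. -/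
def rels3 (m s : ℕ) : Set (FreeGroup (Fin (m + 1))) :=
  (Set.range fun i => FreeGroup.of i * FreeGroup.of i) ∪
  (Set.range fun p : Fin (m + 1) × Fin (m + 1) =>
    (FreeGroup.of p.1 * FreeGroup.of p.2) ^ s) ∪
  (Set.range fun t : Fin (m + 1) × Fin (m + 1) × Fin (m + 1) =>
    FreeGroup.of t.1 * FreeGroup.of t.2.1 * FreeGroup.of t.2.2 *
      (FreeGroup.of t.2.2 * FreeGroup.of t.2.1 * FreeGroup.of t.1)⁻¹)

/-- The group `Γ = ℤ₂^{*(m+1)} / ⟨⟨(aᵢaⱼ)^s, aᵢaⱼaₖ(aₖaⱼaᵢ)⁻¹⟩⟩`. -/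
abbrev Gamma3 (m s : ℕ) := PresentedGroup (rels3 m s)

/-- The generators `a₁, …, aₙ` of `Γ` (with `n = m + 1`). -/
def a3 {m s : ℕ} (i : Fin (m + 1)) : Gamma3 m s := PresentedGroup.of i

/-- The elements `bᵢ = aₙ aᵢ` for `i = 1, …, n − 1`. -/
def b3 {m s : ℕ} (i : Fin m) : Gamma3 m s := a3 (Fin.last m) * a3 i.castSucc

/-!
The relation `aᵢaₙaⱼ = aⱼaₙaᵢ` makes the `bᵢ = aₙaᵢ` commute, and `bᵢ ^ s = (aₙaᵢ) ^ s = 1`.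
Left multiplication by `aᵢ` swaps `H = ⟨bᵢ⟩` and `aₙH`, because `aₙaᵢ = bᵢ` and `aᵢaₙ = bᵢ⁻¹`;
so `Γ = H ∪ aₙH`, and as `aₙ` is odd, `E = H`.
Letting `aᵢ` act on `(ℤ/s)^{n-1}` as the point reflection `v ↦ -eᵢ - v` (with `eₙ = 0`) makes
`bᵢ` act as the translation by `eᵢ`. The translation part of this action is a homomorphism
`H → (ℤ/s)^{n-1}` sending the `bᵢ` to the standard basis, so the `bᵢ` form a `ℤ/s`-basis of `H`.
-/

open Multiplicative

section Relations

variable {m s : ℕ}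

theorem a3_mul_self (i : Fin (m + 1)) : (a3 i : Gamma3 m s) * a3 i = 1 :=
  PresentedGroup.one_of_mem (Or.inl (Or.inl ⟨i, rfl⟩))

theorem a3_inv (i : Fin (m + 1)) : (a3 i : Gamma3 m s)⁻¹ = a3 i :=
  inv_eq_of_mul_eq_one_right (a3_mul_self i)

theorem a3_mul_a3_pow (i j : Fin (m + 1)) : ((a3 i : Gamma3 m s) * a3 j) ^ s = 1 :=
  PresentedGroup.one_of_mem (Or.inl (Or.inr ⟨(i, j), rfl⟩))

theorem a3_mul_a3_mul_a3 (i j k : Fin (m + 1)) :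
    (a3 i : Gamma3 m s) * a3 j * a3 k = a3 k * a3 j * a3 i :=
  PresentedGroup.mk_eq_mk_of_mul_inv_mem (Or.inr ⟨(i, j, k), rfl⟩)

theorem b3_pow (i : Fin m) : (b3 i : Gamma3 m s) ^ s = 1 :=
  a3_mul_a3_pow _ _

theorem b3_mul_comm (i j : Fin m) : (b3 i : Gamma3 m s) * b3 j = b3 j * b3 i := by
  simp only [b3, mul_assoc, ← mul_assoc (a3 i.castSucc),
    a3_mul_a3_mul_a3 i.castSucc (Fin.last m) j.castSucc]

end Relations

abbrev closureB3 (m s : ℕ) : Subgroup (Gamma3 m s) := Subgroup.closure (Set.range b3)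

section ClosureB3

variable {m s : ℕ}

instance : IsMulCommutative (closureB3 m s) :=
  Subgroup.isMulCommutative_closure <| by
    rintro _ ⟨i, rfl⟩ _ ⟨j, rfl⟩
    exact b3_mul_comm i j

theorem a3_last_mul_a3_mem (i : Fin (m + 1)) :
    a3 (Fin.last m) * a3 i ∈ closureB3 m s := by
  induction i using Fin.lastCases with
  | last => simp only [a3_mul_self, one_mem]
  | cast i => exact Subgroup.subset_closure ⟨i, rfl⟩

theorem mem_closureB3_or_a3_last_mul_mem (x : Gamma3 m s) :
    x ∈ closureB3 m s ∨ a3 (Fin.last m) * x ∈ closureB3 m s := by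
  have step (i : Fin (m + 1)) (y : Gamma3 m s)
      (hy : y ∈ closureB3 m s ∨ a3 (Fin.last m) * y ∈ closureB3 m s) :
      a3 i * y ∈ closureB3 m s ∨ a3 (Fin.last m) * (a3 i * y) ∈ closureB3 m s := by
    have hi := a3_last_mul_a3_mem (s := s) i
    rcases hy with hy | hy
    · exact Or.inr (by simpa only [mul_assoc] using mul_mem hi hy)
    · refine Or.inl ?_
      have := mul_mem (inv_mem hi) hy
      rwa [mul_inv_rev, a3_inv, a3_inv, mul_assoc, ← mul_assoc (a3 (Fin.last m)),
        a3_mul_self, one_mul] at this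
  have hx : x ∈ Subgroup.closure (Set.range (a3 (m := m) (s := s))) :=
    (PresentedGroup.closure_range_of _).symm ▸ Subgroup.mem_top x
  induction hx using Subgroup.closure_induction_left with
  | one => exact Or.inl (one_mem _)
  | mul_left _ hg y _ ih =>
    obtain ⟨i, rfl⟩ := hg
    exact step i y ih
  | inv_mul_cancel _ hg y _ ih =>
    obtain ⟨i, rfl⟩ := hg
    simpa only [a3_inv] using step i y ih

theorem ker_eq_closureB3 (π : Gamma3 m s →* Multiplicative (ZMod 2))
    (hπ : ∀ i, π (a3 i) = ofAdd 1) : π.ker = closureB3 m s := by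
  have hle : closureB3 m s ≤ π.ker := by
    refine (Subgroup.closure_le _).2 (Set.range_subset_iff.2 fun i => ?_)
    rw [SetLike.mem_coe, MonoidHom.mem_ker, b3, map_mul, hπ, hπ, ← ofAdd_add]
    rfl
  refine le_antisymm (fun x hx => ?_) hle
  refine (mem_closureB3_or_a3_last_mul_mem x).resolve_right fun h => ?_
  have := hle h
  rw [MonoidHom.mem_ker, map_mul, MonoidHom.mem_ker.1 hx, mul_one, hπ] at this
  exact absurd this (by decide)

end ClosureB3

section Reflections

variable {m s : ℕ} {A : Type*} [AddCommGroup A]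

theorem Equiv.subLeft_mul_subLeft (a b : A) :
    Equiv.subLeft a * Equiv.subLeft b = Equiv.addLeft (a - b) := by
  ext v
  simp only [Equiv.Perm.mul_apply, Equiv.subLeft_apply, Equiv.coe_addLeft]
  abel

def reflectionRep (c : Fin (m + 1) → A) (hc : ∀ i j, s • (c i - c j) = 0) :
    Gamma3 m s →* Equiv.Perm A :=
  PresentedGroup.toGroup (f := fun i => Equiv.subLeft (c i)) <| by
    rintro _ ((⟨i, rfl⟩ | ⟨⟨i, j⟩, rfl⟩) | ⟨⟨i, j, k⟩, rfl⟩)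
    · simp [Equiv.subLeft_mul_subLeft]
    · simp [Equiv.subLeft_mul_subLeft, hc]
    · simp only [map_mul, map_inv, FreeGroup.lift_apply_of, mul_inv_eq_one,
        Equiv.subLeft_mul_subLeft]
      ext v
      simp only [Equiv.Perm.mul_apply, Equiv.subLeft_apply, Equiv.coe_addLeft]
      abel

variable (c : Fin (m + 1) → A) (hc : ∀ i j, s • (c i - c j) = 0)

theorem reflectionRep_b3 (i : Fin m) :
    reflectionRep c hc (b3 i) = Equiv.addLeft (c (Fin.last m) - c i.castSucc) := by
  simp [reflectionRep, b3, a3, Equiv.subLeft_mul_subLeft]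

theorem exists_reflectionRep_eq_addLeft {x : Gamma3 m s} (hx : x ∈ closureB3 m s) :
    ∃ t, reflectionRep c hc x = Equiv.addLeft t := by
  induction hx using Subgroup.closure_induction with
  | mem _ hx =>
    obtain ⟨i, rfl⟩ := hx
    exact ⟨_, reflectionRep_b3 c hc i⟩
  | one => exact ⟨0, by simp⟩
  | mul _ _ _ _ hx hy =>
    obtain ⟨t, ht⟩ := hx
    obtain ⟨u, hu⟩ := hy
    exact ⟨t + u, by rw [map_mul, ht, hu, Equiv.addLeft_add]⟩
  | inv _ _ hx =>
    obtain ⟨t, ht⟩ := hx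
    exact ⟨-t, by rw [map_inv, ht, Equiv.neg_addLeft]⟩

def translationHom : closureB3 m s →* Multiplicative A where
  toFun x := ofAdd (reflectionRep c hc x 0)
  map_one' := by simp
  map_mul' x y := by
    obtain ⟨t, ht⟩ := exists_reflectionRep_eq_addLeft c hc x.2
    simp [ht, ← ofAdd_add]

theorem translationHom_b3 (i : Fin m) :
    translationHom c hc ⟨b3 i, Subgroup.subset_closure ⟨i, rfl⟩⟩ =
      ofAdd (c (Fin.last m) - c i.castSucc) := by
  simp [translationHom, reflectionRep_b3]

end Reflections

theorem LinearMap.bijective_of_map_eq_single {R M ι : Type*} [CommRing R] [AddCommGroup M]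
    [Module R M] [Fintype ι] [DecidableEq ι] {v : ι → M}
    (hv : ⊤ ≤ Submodule.span R (Set.range v)) (f : M →ₗ[R] ι → R)
    (hf : ∀ i, f (v i) = Pi.single i 1) : Function.Bijective f := by
  have hli : LinearIndependent R v := by
    refine .of_comp f ?_
    rw [show ⇑f ∘ v = fun i => Pi.single i 1 from funext hf]
    exact Pi.linearIndependent_single_one ι R
  let B := Module.Basis.mk hli hv
  have hB : f = B.equivFun.toLinearMap := B.ext fun i => by
    ext j
    rw [LinearEquiv.coe_coe, B.equivFun_self, Module.Basis.mk_apply, hf, Pi.single_apply]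
    simp only [eq_comm]
  rw [hB]
  exact B.equivFun.bijective

theorem MonoidHom.bijective_of_map_generators_eq_single {G ι : Type*} [CommGroup G] [Fintype ι]
    [DecidableEq ι] {n : ℕ} {g : ι → G} (hg : Subgroup.closure (Set.range g) = ⊤)
    (hpow : ∀ i, g i ^ n = 1) (f : G →* Multiplicative (ι → ZMod n))
    (hf : ∀ i, f (g i) = ofAdd (Pi.single i 1)) : Function.Bijective f := by
  have htorsion : ∀ x : Additive G, n • x = 0 := by
    have : Subgroup.closure (Set.range g) ≤ (powMonoidHom n).ker :=
      (Subgroup.closure_le _).2 (Set.range_subset_iff.2 hpow)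
    rw [hg] at this
    exact fun x => this (Subgroup.mem_top x.toMul)
  have : Module (ZMod n) (Additive G) := AddCommGroup.zmodModule htorsion
  have hsp : (⊤ : Submodule (ZMod n) (Additive G)) ≤
      Submodule.span (ZMod n) (Set.range (Additive.ofMul ∘ g)) := by
    rintro x -
    obtain ⟨y, rfl⟩ : ∃ y : G, Additive.ofMul y = x := ⟨x.toMul, rfl⟩
    induction hg.symm ▸ Subgroup.mem_top y using Subgroup.closure_induction with
    | mem _ hy =>
      obtain ⟨i, rfl⟩ := hy
      exact Submodule.subset_span ⟨i, rfl⟩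
    | one => exact zero_mem _
    | mul _ _ _ _ hx hy => exact add_mem hx hy
    | inv _ _ hx => exact neg_mem hx
  exact LinearMap.bijective_of_map_eq_single hsp
    ((MonoidHom.toAdditiveLeft f).toZModLinearMap n) fun i => congrArg toAdd (hf i)

section Isomorphism

open scoped IsMulCommutative

variable {m s : ℕ}

theorem closure_range_b3_eq_top :
    Subgroup.closure (Set.range fun i => (⟨b3 i, Subgroup.subset_closure ⟨i, rfl⟩⟩ :
      closureB3 m s)) = ⊤ := by
  convert Subgroup.closure_closure_coe_preimage (k := Set.range (b3 (m := m) (s := s)))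
  ext x
  simp [Subtype.ext_iff]

noncomputable def closureB3MulEquiv (m s : ℕ) :
    closureB3 m s ≃* Multiplicative (Fin m → ZMod s) :=
  let c : Fin (m + 1) → Fin m → ZMod s := Fin.lastCases 0 fun i => -Pi.single i 1
  MulEquiv.ofBijective (translationHom c fun _ _ => by ext; simp) <|
    MonoidHom.bijective_of_map_generators_eq_single closure_range_b3_eq_top
      (fun i => Subtype.ext (b3_pow i)) _ fun i => by simp [translationHom_b3, c]

theorem closureB3MulEquiv_b3 (i : Fin m) :
    closureB3MulEquiv m s ⟨b3 i, Subgroup.subset_closure ⟨i, rfl⟩⟩ = ofAdd (Pi.single i 1) := by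
  simp [closureB3MulEquiv, translationHom_b3]

end Isomorphism

theorem stmt3_general (m s : ℕ)
    (π : Gamma3 m s →* Multiplicative (ZMod 2))
    (hπ : ∀ i, π (a3 i) = Multiplicative.ofAdd 1) :
    (∀ x ∈ π.ker, ∀ y ∈ π.ker, x * y = y * x) ∧
    π.ker = Subgroup.closure (Set.range (b3 (m := m) (s := s))) ∧
    (∀ i : Fin m, (b3 (m := m) (s := s) i) ^ s = 1) ∧
    ∃ e : ↥π.ker ≃* Multiplicative (Fin m → ZMod s),
      ∀ (i : Fin m) (h : b3 (m := m) (s := s) i ∈ π.ker),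
        e ⟨b3 i, h⟩ = Multiplicative.ofAdd (Pi.single i 1) := by
  have hker := ker_eq_closureB3 π hπ
  refine ⟨fun x hx y hy => setLike_mul_comm (hker ▸ hx) (hker ▸ hy), hker, b3_pow, ?_⟩
  exact ⟨(MulEquiv.subgroupCongr hker).trans (closureB3MulEquiv m s),
    fun i _ => closureB3MulEquiv_b3 i⟩

/-- The even-length subgroup `E` of `Γ` is abelian, generated by the `bᵢ`,
each of order dividing `s`, and `E ≅ ℤ_s^{⊕(n−1)}` via `bᵢ ↦` i-th standard
generator. Here `E` is the kernel of the sign homomorphism `Γ → ℤ₂`. -/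
theorem stmt3 (m s : ℕ) (hm : 1 ≤ m) (hs : 1 ≤ s)
    (π : Gamma3 m s →* Multiplicative (ZMod 2))
    (hπ : ∀ i, π (a3 i) = Multiplicative.ofAdd 1) :
    (∀ x ∈ π.ker, ∀ y ∈ π.ker, x * y = y * x) ∧
    π.ker = Subgroup.closure (Set.range (b3 (m := m) (s := s))) ∧
    (∀ i : Fin m, (b3 (m := m) (s := s) i) ^ s = 1) ∧
    ∃ e : ↥π.ker ≃* Multiplicative (Fin m → ZMod s),
      ∀ (i : Fin m) (h : b3 (m := m) (s := s) i ∈ π.ker),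
        e ⟨b3 i, h⟩ = Multiplicative.ofAdd (Pi.single i 1) :=
  stmt3_general m s π hπ
end

section
/- For every n ≥ 4 there exists a normal subgroup N of ℤ₂^{*n} that is invariant under all automorphisms permuting the generators, but is not invariant under all endomorphisms of the form aᵢ ↦ a_{φ(i)} for maps φ: {1,…,n} → {1,…,n}. -/
/-- Relations making each generator an involution: `aᵢ² = 1`. -/
def z2Rels (n : ℕ) : Set (FreeGroup (Fin n)) :=
  Set.range fun i => FreeGroup.of i * FreeGroup.of i

/-- The free product `ℤ₂^{*n}` of `n` copies of `ℤ₂`. -/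
abbrev Z2Star (n : ℕ) := PresentedGroup (z2Rels n)

/-- The canonical generators `a₁, …, aₙ`. -/
def gen {n : ℕ} (i : Fin n) : Z2Star n := PresentedGroup.of i

/-!
Take `N = ker π` for `π : ℤ₂^{*n} → Sym({0, 1, …, n})`, `aᵢ ↦ (0 i)`. Relabelling the generators
by `σ` conjugates `π` by the permutation fixing `0` and acting as `σ` on the rest, so it
preserves `N`. The transpositions `(0 1), (0 2), (0 3), (0 4)` multiply to a 5-cycle, so
`(a₁a₂a₃a₄)⁵ ∈ N`; but the map `a₃ ↦ a₁, a₄ ↦ a₂` sends it to `(a₁a₂)¹⁰`, whose image under `π`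
is the 3-cycle `((0 1)(0 2))¹⁰ ≠ 1`.
-/

open Equiv

section SwapProducts

variable {α : Type*} [DecidableEq α]

theorem swap_mul_swap_mul_swap_mul_swap_pow_five {a b c d e : α}
    (hab : a ≠ b) (hac : a ≠ c) (had : a ≠ d) (hae : a ≠ e) (hbc : b ≠ c) (hbd : b ≠ d)
    (hbe : b ≠ e) (hcd : c ≠ d) (hce : c ≠ e) (hde : d ≠ e) :
    (swap a b * swap a c * swap a d * swap a e) ^ 5 = 1 := by
  ext x
  by_cases hx : x = a ∨ x = b ∨ x = c ∨ x = d ∨ x = e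
  · rcases hx with rfl | rfl | rfl | rfl | rfl <;>
      simp [pow_succ, swap_apply_of_ne_of_ne, hbc, hbd, hbe, hcd, hce, hde, hab.symm, hac.symm,
        had.symm, hae.symm, hbc.symm, hbd.symm, hbe.symm, hcd.symm, hce.symm, hde.symm]
  · push Not at hx
    simp [pow_succ, swap_apply_of_ne_of_ne, hx]

theorem swap_mul_swap_mul_swap_mul_swap_pow_five_ne_one {a b c : α}
    (hab : a ≠ b) (hac : a ≠ c) (hbc : b ≠ c) :
    (swap a b * swap a c * swap a b * swap a c) ^ 5 ≠ 1 := by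
  intro h
  have h_apply := congr($h a)
  simp [pow_succ, swap_apply_of_ne_of_ne, hbc, hab.symm, hac.symm, hbc.symm] at h_apply

end SwapProducts

theorem MonoidHom.ker_le_comap_ker_of_comp_eq {G H : Type*} [Group G] [MulOneClass H]
    {π : G →* H} {f : G →* G} {c : H →* H} (h : π.comp f = c.comp π) :
    π.ker ≤ π.ker.comap f := by
  intro g hg
  rw [Subgroup.mem_comap, MonoidHom.mem_ker, ← MonoidHom.comp_apply, h, MonoidHom.comp_apply,
    (MonoidHom.mem_ker).1 hg, map_one]

namespace Z2Star

variable {n : ℕ} {G : Type*} [Group G]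

theorem gen_mul_self (i : Fin n) : gen i * gen i = 1 := by
  have h : FreeGroup.of i * FreeGroup.of i ∈ Subgroup.normalClosure (z2Rels n) :=
    Subgroup.subset_normalClosure ⟨i, rfl⟩
  have h_mk : PresentedGroup.mk (z2Rels n) (FreeGroup.of i * FreeGroup.of i) = 1 :=
    (QuotientGroup.eq_one_iff _).2 h
  simpa [gen, PresentedGroup.of] using h_mk

def lift (x : Fin n → G) (hx : ∀ i, x i * x i = 1) : Z2Star n →* G :=
  PresentedGroup.toGroup (by rintro _ ⟨i, rfl⟩; simpa using hx i)

@[simp]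
theorem lift_gen (x : Fin n → G) (hx : ∀ i, x i * x i = 1) (i : Fin n) :
    lift x hx (gen i) = x i :=
  PresentedGroup.toGroup.of _

theorem hom_ext {f g : Z2Star n →* G} (h : ∀ i, f (gen i) = g (gen i)) : f = g :=
  PresentedGroup.ext h

def map (φ : Fin n → Fin n) : Z2Star n →* Z2Star n :=
  lift (fun i => gen (φ i)) fun i => gen_mul_self (φ i)

@[simp]
theorem map_gen (φ : Fin n → Fin n) (i : Fin n) : map φ (gen i) = gen (φ i) :=
  lift_gen _ _ i

/-- `none` plays the role of the extra point `0`, so `aᵢ ↦ (0 i)`. -/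
def toPerm : Z2Star n →* Perm (Option (Fin n)) :=
  lift (fun i => swap none (some i)) fun _ => swap_mul_self _ _

@[simp]
theorem toPerm_gen (i : Fin n) : toPerm (gen i) = swap none (some i) :=
  lift_gen _ _ i

theorem toPerm_comp_of_gen_eq_perm (σ : Perm (Fin n)) (f : Z2Star n →* Z2Star n)
    (hf : ∀ i, f (gen i) = gen (σ i)) :
    toPerm.comp f = (MulAut.conj (optionCongr σ)).toMonoidHom.comp toPerm := by
  refine hom_ext fun i => ?_
  rw [MonoidHom.comp_apply, hf, toPerm_gen, MonoidHom.comp_apply, toPerm_gen,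
    MulEquiv.coe_toMonoidHom, MulAut.conj_apply, ← swap_apply_apply]
  simp

theorem ker_toPerm_le_comap_of_gen_eq_perm (σ : Perm (Fin n)) (f : Z2Star n →* Z2Star n)
    (hf : ∀ i, f (gen i) = gen (σ i)) : toPerm.ker ≤ toPerm.ker.comap f :=
  MonoidHom.ker_le_comap_ker_of_comp_eq (toPerm_comp_of_gen_eq_perm σ f hf)

theorem exists_map_not_mem_ker_toPerm (hn : 4 ≤ n) :
    ∃ φ : Fin n → Fin n, ∃ g ∈ (toPerm : Z2Star n →* _).ker, map φ g ∉ toPerm.ker := by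
  let i : Fin 4 → Fin n := fun k => ⟨k, by omega⟩
  have hi : ∀ k l : Fin 4, k ≠ l → some (i k) ≠ some (i l) := by
    simp [i, Fin.ext_iff]
  let g := (gen (i 0) * gen (i 1) * gen (i 2) * gen (i 3)) ^ 5
  have hg : toPerm g = 1 := by
    simpa [g] using swap_mul_swap_mul_swap_mul_swap_pow_five (a := none) (by simp) (by simp)
      (by simp) (by simp) (hi 0 1 (by decide)) (hi 0 2 (by decide)) (hi 0 3 (by decide))
      (hi 1 2 (by decide)) (hi 1 3 (by decide)) (hi 2 3 (by decide))
  let φ : Fin n → Fin n := fun j => ⟨j % 2, by omega⟩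
  have hφg : map φ g = (gen (i 0) * gen (i 1) * gen (i 0) * gen (i 1)) ^ 5 := by
    simp [g, φ, i]
  refine ⟨φ, g, hg, ?_⟩
  rw [MonoidHom.mem_ker, hφg]
  simpa using swap_mul_swap_mul_swap_mul_swap_pow_five_ne_one (a := none) (by simp) (by simp)
    (hi 0 1 (by decide))

end Z2Star

/-- For every `n ≥ 4` there is a normal subgroup `N ≤ ℤ₂^{*n}` invariant under
all automorphisms permuting the generators, but not under all endomorphisms
`aᵢ ↦ a_{φ(i)}` with `φ : {1,…,n} → {1,…,n}` an arbitrary map. -/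
theorem stmt9 (n : ℕ) (hn : 4 ≤ n) :
    ∃ N : Subgroup (Z2Star n), N.Normal ∧
      (∀ σ : Equiv.Perm (Fin n), ∀ f : Z2Star n →* Z2Star n,
        (∀ i, f (gen i) = gen (σ i)) → ∀ g ∈ N, f g ∈ N) ∧
      ¬ (∀ φ : Fin n → Fin n, ∀ f : Z2Star n →* Z2Star n,
        (∀ i, f (gen i) = gen (φ i)) → ∀ g ∈ N, f g ∈ N) := by
  refine ⟨Z2Star.toPerm.ker, Z2Star.toPerm.normal_ker,
    fun σ f hf g hg => Z2Star.ker_toPerm_le_comap_of_gen_eq_perm σ f hf hg, ?_⟩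
  intro h_invariant
  obtain ⟨φ, g, hg, hφg⟩ := Z2Star.exists_map_not_mem_ker_toPerm hn
  exact hφg (h_invariant φ (Z2Star.map φ) (Z2Star.map_gen φ) g hg)
end
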